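/- arXiv:1908.09164 — 4 statements merged into one kernel-verified Lean document; each statement's English description precedes it below -/
import Mathlib

section
/- For every m ∈ ℕ, the Margolis homology of the dual Steenrod algebra with respect to Q_m vanishes: LinearMap.ker Q_m = LinearMap.range Q_m as F₂-submodules of A; equivalently, every x ∈ A with Q_m(x) = 0 equals Q_m(y) for some y ∈ A. (Lemma 2.15 of the paper: H(A_*; Q_m) ≅ 0 for all m ≥ 0, i.e. the Margolis homology of HF₂ vanishes.) -/
/-!
`Q_m` squares to zero, and `ξ_{m+1}` is a contracting homotopy: since `Q_m ξ_{m+1} = 1`,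
the Leibniz rule gives `Q_m (ξ_{m+1} x) = x` for every cycle `x`.
-/

open MvPolynomial

abbrev F₂ : Type := ZMod 2

/-- The mod 2 dual Steenrod algebra, modeled as a polynomial algebra on `ξ_i`, `i ≥ 1`. -/
abbrev A : Type := MvPolynomial {i : ℕ // 1 ≤ i} F₂

/-- The generators `ξ_k`, with the convention `ξ_0 = 1`. -/
noncomputable def ξ (k : ℕ) : A :=
  if h : 1 ≤ k then X (⟨k, h⟩ : {i : ℕ // 1 ≤ i}) else 1

/-- The Milnor primitive `Q_m`, as the unique `F₂`-derivation of `A` with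
`Q_m (ξ_k) = ξ_{k-m-1} ^ (2 ^ (m+1))` for `k ≥ m + 1` and `Q_m (ξ_k) = 0` for `1 ≤ k ≤ m`. -/
noncomputable def Q (m : ℕ) : Derivation F₂ A A :=
  MvPolynomial.mkDerivation F₂ fun i : {i : ℕ // 1 ≤ i} =>
    if m + 1 ≤ i.1 then ξ (i.1 - (m + 1)) ^ 2 ^ (m + 1) else 0

namespace Derivation

section CharTwo

variable {R B : Type*} [CommSemiring R] [CommRing B] [Algebra R B] [CharP B 2]

theorem apply_pow_two_pow_succ_eq_zero (D : Derivation R B B) (a : B) (n : ℕ) :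
    D (a ^ 2 ^ (n + 1)) = 0 := by
  rw [pow_succ, pow_mul, leibniz_pow, CharTwo.two_nsmul]

/-- The cross terms `2 • D a * D b` of the Leibniz rule for `D ∘ D` vanish in characteristic two. -/
noncomputable def compSelfOfCharTwo (D : Derivation R B B) : Derivation R B B where
  toLinearMap := D.toLinearMap ∘ₗ D.toLinearMap
  map_one_eq_zero' := by simp
  leibniz' a b := by
    change D (D (a * b)) = a * D (D b) + b * D (D a)
    simp only [leibniz, smul_eq_mul, map_add]
    linear_combination (CharTwo.two_eq_zero (R := B)) * (D a * D b)

@[simp]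
theorem compSelfOfCharTwo_apply (D : Derivation R B B) (a : B) :
    D.compSelfOfCharTwo a = D (D a) :=
  rfl

end CharTwo

theorem ker_eq_range_of_apply_eq_one {R B : Type*} [CommSemiring R] [CommSemiring B]
    [Algebra R B] (D : Derivation R B B) (hD : ∀ x, D (D x) = 0) {s : B} (hs : D s = 1) :
    LinearMap.ker D.toLinearMap = LinearMap.range D.toLinearMap := by
  ext x
  refine ⟨fun hx => ⟨s * x, ?_⟩, fun ⟨y, hy⟩ => hy ▸ hD y⟩
  have hx : D x = 0 := hx
  change D (s * x) = x
  rw [leibniz, hx, hs, smul_zero, smul_eq_mul, mul_one, zero_add]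

end Derivation

theorem MvPolynomial.derivation_apply_apply_eq_zero {σ R : Type*} [CommRing R] [CharP R 2]
    (D : Derivation R (MvPolynomial σ R) (MvPolynomial σ R)) (hD : ∀ i, D (D (X i)) = 0)
    (p : MvPolynomial σ R) : D (D p) = 0 := by
  have hsq : D.compSelfOfCharTwo = 0 := derivation_ext fun i => hD i
  simpa using congrArg (fun E : Derivation R _ _ => E p) hsq

theorem Q_X (m : ℕ) (i : {i : ℕ // 1 ≤ i}) :
    Q m (X i) = if m + 1 ≤ i.1 then ξ (i.1 - (m + 1)) ^ 2 ^ (m + 1) else 0 :=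
  mkDerivation_X _ _ _

theorem Q_ξ_succ (m : ℕ) : Q m (ξ (m + 1)) = 1 := by
  simp [ξ, Q_X]

theorem Q_Q (m : ℕ) (x : A) : Q m (Q m x) = 0 := by
  refine derivation_apply_apply_eq_zero _ (fun i => ?_) x
  rw [Q_X]
  split
  · exact Derivation.apply_pow_two_pow_succ_eq_zero _ _ _
  · exact map_zero _

/-- The Margolis homology of the dual Steenrod algebra vanishes:
`ker Q_m = range Q_m` for every `m ≥ 0`. -/
theorem margolisHomology_dualSteenrod_vanishes (m : ℕ) :
    LinearMap.ker (Q m).toLinearMap = LinearMap.range (Q m).toLinearMap :=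
  (Q m).ker_eq_range_of_apply_eq_one (Q_Q m) (Q_ξ_succ m)
end

section
/- Fix n ≥ 1. The following hold for the subalgebra A_n: (i) Q_m(A_n) ⊆ A_n for every m ∈ ℕ; (ii) for every m with 0 ≤ m ≤ n−1, every x ∈ A_n with Q_m(x) = 0 equals Q_m(y) for some y ∈ A_n, so the Margolis homology of A_n with respect to Q_m vanishes; (iii) for every m ≥ n, Q_m vanishes identically on A_n, so the Margolis homology of A_n with respect to Q_m is all of A_n. (Lemma 2.17 of the paper: H(y(n); Q_m) ≅ 0 for 0 ≤ m ≤ n−1 and H(y(n); Q_m) ≅ H_*(y(n)) for m ≥ n.) -/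
/-!
Let `F₂ := ZMod 2` and `A := MvPolynomial {i : ℕ // 1 ≤ i} F₂`, modeling the mod 2 dual
Steenrod algebra, with Milnor primitives `Q m` as below.  For `n ≥ 1` let `An n ⊆ A` be the
`F₂`-subalgebra generated by `ξ₁, …, ξ_n`, modeling `H_*(y(n); F₂) = F₂[ξ̄₁, …, ξ̄_n]`.

STATEMENT (Lemma 2.17): (i) `Q_m (A_n) ⊆ A_n` for every `m`; (ii) for `0 ≤ m ≤ n - 1`, every
`x ∈ A_n` with `Q_m x = 0` equals `Q_m y` for some `y ∈ A_n` (Margolis homology vanishes);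
(iii) for `m ≥ n`, `Q_m` vanishes identically on `A_n` (Margolis homology is all of `A_n`).
-/

open MvPolynomial

/-- The subalgebra `A_n = F₂[ξ₁, …, ξ_n] ⊆ A`, modeling `H_*(y(n); F₂)`. -/
noncomputable def An (n : ℕ) : Subalgebra F₂ A :=
  Algebra.adjoin F₂ {y : A | ∃ k : ℕ, 1 ≤ k ∧ k ≤ n ∧ y = ξ k}

/-!
`Q_m` is a derivation, so its behaviour on `A_n` is governed by its values on the generators:
`Q_m ξ_k = ξ_{k-m-1}^{2^{m+1}}` lies in `A_n` for `k ≤ n` and vanishes for `k ≤ m`, which gives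
(i) and (iii). For `m < n` the generator `ξ_{m+1} ∈ A_n` satisfies `Q_m ξ_{m+1} = 1`, so
multiplication by it is a contracting homotopy: `Q_m (ξ_{m+1} x) = x` whenever `Q_m x = 0`.
-/

namespace Derivation

variable {R S : Type*} [CommSemiring R] [CommSemiring S] [Algebra R S]

theorem map_mem_of_mem_adjoin (D : Derivation R S S) {s : Set S} {B : Subalgebra R S}
    (hs : s ⊆ B) (hD : ∀ x ∈ s, D x ∈ B) {x : S} (hx : x ∈ Algebra.adjoin R s) : D x ∈ B := by
  induction hx using Algebra.adjoin_induction with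
  | mem y hy => exact hD y hy
  | algebraMap r => simp
  | add x y _ _ hx hy => simpa using add_mem hx hy
  | mul x y hx' hy' hx hy =>
    rw [leibniz, smul_eq_mul, smul_eq_mul]
    exact add_mem (mul_mem (Algebra.adjoin_le hs hx') hy) (mul_mem (Algebra.adjoin_le hs hy') hx)

theorem eq_map_mul_of_map_eq_one (D : Derivation R S S) {u x : S} (hu : D u = 1)
    (hx : D x = 0) : x = D (u * x) := by
  rw [leibniz, smul_eq_mul, smul_eq_mul, hx, hu, mul_zero, mul_one, zero_add]

end Derivation

theorem ξ_zero : ξ 0 = 1 := rfl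

theorem ξ_mem_An {n k : ℕ} (hk : k ≤ n) : ξ k ∈ An n := by
  rcases Nat.eq_zero_or_pos k with rfl | hk₁
  · exact ξ_zero ▸ one_mem _
  · exact Algebra.subset_adjoin ⟨k, hk₁, hk, rfl⟩

theorem Q_ξ (m : ℕ) {k : ℕ} (hk : 1 ≤ k) :
    Q m (ξ k) = if m + 1 ≤ k then ξ (k - (m + 1)) ^ 2 ^ (m + 1) else 0 := by
  rw [ξ, dif_pos hk, Q, mkDerivation_X]

theorem Q_ξ_of_le {m k : ℕ} (hk : 1 ≤ k) (hkm : k ≤ m) : Q m (ξ k) = 0 := by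
  rw [Q_ξ m hk, if_neg (by omega)]

theorem Q_mem_An (m n : ℕ) {x : A} (hx : x ∈ An n) : Q m x ∈ An n := by
  refine (Q m).map_mem_of_mem_adjoin (fun y hy => Algebra.subset_adjoin hy) ?_ hx
  rintro _ ⟨k, hk₁, hkn, rfl⟩
  rw [Q_ξ m hk₁]
  split_ifs
  · exact pow_mem (ξ_mem_An (by omega)) _
  · exact zero_mem _

theorem Q_eq_zero_of_mem_An {m n : ℕ} (hnm : n ≤ m) {x : A} (hx : x ∈ An n) : Q m x = 0 := by
  refine (Q m).eqOn_adjoin (D2 := 0) ?_ hx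
  rintro _ ⟨k, hk₁, hkn, rfl⟩
  exact Q_ξ_of_le hk₁ (hkn.trans hnm)

/-- The Margolis homology of `H_*(y(n); F₂)` vanishes for `0 ≤ m ≤ n - 1` and is all of
`H_*(y(n); F₂)` for `m ≥ n`. -/
theorem margolisHomology_yn (n : ℕ) (hn : 1 ≤ n) :
    (∀ m : ℕ, ∀ x ∈ An n, Q m x ∈ An n) ∧
    (∀ m : ℕ, m ≤ n - 1 → ∀ x ∈ An n, Q m x = 0 → ∃ y ∈ An n, x = Q m y) ∧
    (∀ m : ℕ, n ≤ m → ∀ x ∈ An n, Q m x = 0) := by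
  refine ⟨fun m x hx => Q_mem_An m n hx, fun m hm x hx hQx => ?_,
    fun m hnm x hx => Q_eq_zero_of_mem_An hnm hx⟩
  exact ⟨ξ (m + 1) * x, mul_mem (ξ_mem_An (by omega)) hx,
    (Q m).eq_map_mul_of_map_eq_one (Q_ξ_succ m) hQx⟩
end

section
/- Fix n ≥ 1. There is a unique F₂-derivation σ : R → R with σ(x_i) = e_i and σ(e_i) = 0 for all i ∈ Fin n; it satisfies σ ∘ σ = 0, and the residue classes of the monomials (∏_{i ∈ Fin n} x_i^(2·a_i)) · ∏_{i ∈ T} (x_i·e_i), as a ranges over functions Fin n → ℕ and T over finite subsets of Fin n, form an F₂-basis of ker σ ⧸ range σ. Equivalently, the σ-homology of P(x₁,…,x_n) ⊗ E(e₁,…,e_n) is P(x₁²,…,x_n²) ⊗ E(x₁e₁,…,x_ne_n). (This is the algebraic computation of the E³ = E^∞-columns of the homological Tate spectral sequence for THH(y(n)) carried out in the proof of Proposition 4.3 of the paper.) -/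
/-!
Let `F₂ := ZMod 2`, fix `n ≥ 1`, and let `R n` be the quotient of
`MvPolynomial (Fin n ⊕ Fin n) F₂` by the ideal generated by the squares of the variables of the
second summand, so `R n ≅ P(x₁,…,x_n) ⊗ E(e₁,…,e_n)`, modeling
`H_*(THH(y(n)); F₂) ≅ P(ξ̄₁,…,ξ̄_n) ⊗ E(σξ̄₁,…,σξ̄_n)`.

STATEMENT (algebraic content of Proposition 4.3): there is a unique `F₂`-derivation
`σ : R → R` with `σ x_i = e_i` and `σ e_i = 0`; it satisfies `σ ∘ σ = 0`, and the residue
classes of the monomials `(∏ i, x_i^(2 a_i)) * ∏_{i ∈ T} (x_i e_i)` form an `F₂`-basis of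
`ker σ ⧸ range σ`.
-/

open MvPolynomial

set_option synthInstance.maxHeartbeats 1000000
set_option maxHeartbeats 2000000

/-- The ideal generated by the squares of the exterior variables. -/
noncomputable def Isq (n : ℕ) : Ideal (MvPolynomial (Fin n ⊕ Fin n) F₂) :=
  Ideal.span (Set.range fun i : Fin n =>
    (X (Sum.inr i) : MvPolynomial (Fin n ⊕ Fin n) F₂) ^ 2)

/-- `R n ≅ P(x₁,…,x_n) ⊗ E(e₁,…,e_n)`, modeling `H_*(THH(y(n)); F₂)`. -/
abbrev R (n : ℕ) : Type := MvPolynomial (Fin n ⊕ Fin n) F₂ ⧸ Isq n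

/-- The polynomial generator `x_i`, modeling `ξ̄_i`. -/
noncomputable def x (n : ℕ) (i : Fin n) : R n :=
  Ideal.Quotient.mk (Isq n) (X (Sum.inl i))

/-- The exterior generator `e_i`, modeling `σξ̄_i`. -/
noncomputable def e (n : ℕ) (i : Fin n) : R n :=
  Ideal.Quotient.mk (Isq n) (X (Sum.inr i))

/-- The monomial `(∏ i, x_i^(2 a_i)) * ∏_{i ∈ T} (x_i e_i)` indexed by `p = (a, T)`. -/
noncomputable def mono (n : ℕ) (p : (Fin n → ℕ) × Finset (Fin n)) : R n :=
  (∏ i : Fin n, x n i ^ (2 * p.1 i)) * ∏ i ∈ p.2, (x n i * e n i)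

namespace Prop43

variable {n : ℕ}

abbrev B (n : ℕ) : Type := (Fin n → ℕ) × Finset (Fin n)

/-- The exponent finsupp of the basis monomial indexed by `p`. -/
noncomputable def μ (p : B n) : (Fin n ⊕ Fin n) →₀ ℕ :=
  Finsupp.equivFunOnFinite.symm (Sum.elim p.1 fun i => if i ∈ p.2 then 1 else 0)

@[simp] lemma μ_inl (p : B n) (i : Fin n) : μ p (Sum.inl i) = p.1 i := rfl
@[simp] lemma μ_inr (p : B n) (i : Fin n) : μ p (Sum.inr i) = if i ∈ p.2 then 1 else 0 := rfl

lemma μ_injective : Function.Injective (μ (n := n)) := by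
  intro p q h
  have h' : ∀ s, μ p s = μ q s := fun s => by rw [h]
  ext1
  · funext i; simpa using h' (Sum.inl i)
  · ext i
    have := h' (Sum.inr i)
    simp only [μ_inr] at this
    by_cases hp : i ∈ p.2 <;> by_cases hq : i ∈ q.2 <;> simp_all

/-- The basis monomial of `R n` indexed by `p`. -/
noncomputable def v (n : ℕ) (p : B n) : R n :=
  (∏ i, x n i ^ p.1 i) * ∏ i ∈ p.2, e n i

lemma monomial_ne_sq {ν : (Fin n ⊕ Fin n) →₀ ℕ} (j : Fin n) (h : 2 ≤ ν (Sum.inr j)) (c : F₂) :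
    monomial ν c ∈ Isq n := by
  have hle : (2 • Finsupp.single (Sum.inr j) 1 : (Fin n ⊕ Fin n) →₀ ℕ) ≤ ν := by
    intro s
    rcases eq_or_ne s (Sum.inr j) with rfl | hs
    · simpa using h
    · simp [Finsupp.single_apply, hs.symm]
  have key : monomial ν c
      = monomial (ν - 2 • Finsupp.single (Sum.inr j) 1) c * (X (Sum.inr j)) ^ 2 := by
    rw [X, monomial_pow, monomial_mul, tsub_add_cancel_of_le hle, one_pow, mul_one]
  rw [key]
  exact Ideal.mul_mem_left _ _ (Ideal.subset_span ⟨j, rfl⟩)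

lemma coeff_eq_zero_of_mem_Isq {q : MvPolynomial (Fin n ⊕ Fin n) F₂} (hq : q ∈ Isq n)
    {ν : (Fin n ⊕ Fin n) →₀ ℕ} (hν : ∀ j, ν (Sum.inr j) ≤ 1) : coeff ν q = 0 := by
  rw [Isq, Ideal.mem_span_range_iff_exists_fun] at hq
  obtain ⟨c, rfl⟩ := hq
  rw [coeff_sum]
  refine Finset.sum_eq_zero fun i _ => ?_
  have hx2 : (X (Sum.inr i) : MvPolynomial (Fin n ⊕ Fin n) F₂) ^ 2
      = monomial (2 • Finsupp.single (Sum.inr i) 1) 1 := by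
    rw [X, monomial_pow, one_pow]
  rw [hx2, coeff_mul_monomial', if_neg]
  intro hle
  have := hle (Sum.inr i)
  have h2 := hν i
  simp at this
  omega

lemma mk_monomial (ν : (Fin n ⊕ Fin n) →₀ ℕ) :
    Ideal.Quotient.mk (Isq n) (monomial ν 1)
      = (∏ i, x n i ^ ν (Sum.inl i)) * ∏ i, e n i ^ ν (Sum.inr i) := by
  have h1 : (monomial ν (1:F₂)) = ∏ s : Fin n ⊕ Fin n, X s ^ ν s := by
    rw [monomial_eq, C_1, one_mul]
    exact Finset.prod_subset (Finset.subset_univ ν.support)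
      fun s _ hs => by simp [Finsupp.notMem_support_iff.1 hs]
  rw [h1]
  rw [show Ideal.Quotient.mk (Isq n) (∏ s : Fin n ⊕ Fin n, X s ^ ν s)
      = ∏ s : Fin n ⊕ Fin n, Ideal.Quotient.mk (Isq n) (X s ^ ν s) from
    map_prod (Ideal.Quotient.mk (Isq n)) _ _]
  rw [Fintype.prod_sum_type]
  simp only [map_pow]
  rfl

lemma v_eq_mk (p : B n) : v n p = Ideal.Quotient.mk (Isq n) (monomial (μ p) 1) := by
  rw [mk_monomial, v]
  congr 1
  simp only [μ_inr, pow_ite, pow_one, pow_zero]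
  rw [Finset.prod_ite_mem, Finset.univ_inter]

lemma mk_smul (a : F₂) (q : MvPolynomial (Fin n ⊕ Fin n) F₂) :
    Ideal.Quotient.mk (Isq n) (a • q) = a • Ideal.Quotient.mk (Isq n) q := by
  have := map_smul (Ideal.Quotient.mkₐ F₂ (Isq n)) a q
  rwa [Ideal.Quotient.mkₐ_eq_mk] at this

lemma li_v : LinearIndependent F₂ (v n) := by
  rw [linearIndependent_iff]
  intro l hl
  have hP : Ideal.Quotient.mk (Isq n) (l.sum fun p a => a • monomial (μ p) 1) = 0 := by
    rw [map_finsuppSum]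
    rw [Finsupp.linearCombination_apply] at hl
    rw [← hl]
    refine Finsupp.sum_congr fun p _ => ?_
    rw [mk_smul, ← v_eq_mk]
  rw [Ideal.Quotient.eq_zero_iff_mem] at hP
  ext p
  have hcoeff : coeff (μ p) (l.sum fun p a => a • monomial (μ p) 1) = l p := by
    rw [Finsupp.sum, coeff_sum]
    simp only [coeff_smul, coeff_monomial, smul_eq_mul]
    rw [Finset.sum_eq_single p]
    · simp
    · intro q _ hq
      rw [if_neg (fun h => hq (μ_injective h)), mul_zero]
    · intro hp
      rw [Finsupp.notMem_support_iff.1 hp, zero_mul]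
  have := coeff_eq_zero_of_mem_Isq hP (ν := μ p) (fun j => by simp only [μ_inr]; split <;> omega)
  rw [hcoeff] at this
  simpa using this

lemma span_v (r : R n) : r ∈ Submodule.span F₂ (Set.range (v n)) := by
  obtain ⟨q, rfl⟩ := Ideal.Quotient.mk_surjective r
  induction q using MvPolynomial.induction_on' with
  | add q₁ q₂ h₁ h₂ => rw [map_add]; exact Submodule.add_mem _ h₁ h₂
  | monomial ν c =>
      by_cases hsq : ∀ j, ν (Sum.inr j) ≤ 1
      · set p : B n := (fun i => ν (Sum.inl i), Finset.univ.filter fun i => ν (Sum.inr i) = 1)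
          with hp
        have hμ : μ p = ν := by
          ext s
          rcases s with i | j
          · rfl
          · simp only [μ_inr, hp, Finset.mem_filter, Finset.mem_univ, true_and]
            have := hsq j
            split <;> omega
        have : Ideal.Quotient.mk (Isq n) (monomial ν c) = c • v n p := by
          rw [v_eq_mk, hμ, ← mk_smul]
          congr 1
          rw [smul_monomial, smul_eq_mul, mul_one]
        rw [this]
        exact Submodule.smul_mem _ _ (Submodule.subset_span ⟨p, rfl⟩)
      · push_neg at hsq
        obtain ⟨j, hj⟩ := hsq
        rw [Ideal.Quotient.eq_zero_iff_mem.2 (monomial_ne_sq j hj c)]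
        exact Submodule.zero_mem _

/-- The monomial basis of `R n`. -/
noncomputable def bR (n : ℕ) : Module.Basis (B n) F₂ (R n) :=
  Module.Basis.mk li_v (fun r _ => span_v r)

@[simp] lemma bR_apply (p : B n) : bR n p = v n p := Module.Basis.mk_apply _ _ _


lemma addSelf {M : Type*} [AddCommMonoid M] [Module F₂ M] (z : M) : z + z = 0 := by
  have := two_smul F₂ z
  rw [show (2:F₂) = 0 by decide, zero_smul] at this
  exact this.symm

lemma even_nsmul {M : Type*} [AddCommMonoid M] [Module F₂ M] {k : ℕ} (hk : ¬ Odd k) (z : M) :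
    k • z = 0 := by
  rw [Nat.not_odd_iff_even] at hk
  obtain ⟨m, rfl⟩ := hk
  rw [add_nsmul, addSelf]

lemma odd_nsmul {M : Type*} [AddCommMonoid M] [Module F₂ M] {k : ℕ} (hk : Odd k) (z : M) :
    k • z = z := by
  obtain ⟨m, rfl⟩ := hk
  rw [add_nsmul, one_nsmul, two_mul, add_nsmul, addSelf, zero_add]

lemma esq (i : Fin n) : e n i * e n i = 0 := by
  have h : e n i * e n i = Ideal.Quotient.mk (Isq n) ((X (Sum.inr i)) ^ 2) := by
    rw [e, ← map_mul, sq]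
  rw [h, Ideal.Quotient.eq_zero_iff_mem]
  exact Ideal.subset_span ⟨i, rfl⟩

lemma D_prod {ι : Type*} [DecidableEq ι] (σ : Derivation F₂ (R n) (R n)) (s : Finset ι)
    (f : ι → R n) :
    σ (∏ i ∈ s, f i) = ∑ i ∈ s, (∏ j ∈ s.erase i, f j) * σ (f i) := by
  induction s using Finset.induction_on with
  | empty => simp
  | insert _ _ ha ih =>
    rename_i a s'
    rw [Finset.prod_insert ha, Derivation.leibniz, smul_eq_mul, smul_eq_mul, ih,
      Finset.sum_insert ha, Finset.erase_insert ha, Finset.mul_sum]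
    have hh : ∀ i ∈ s', (∏ j ∈ (insert a s').erase i, f j) * σ (f i)
        = f a * ((∏ j ∈ s'.erase i, f j) * σ (f i)) := by
      intro i hi
      rw [Finset.erase_insert_of_ne (show a ≠ i from fun h => ha (h ▸ hi)),
        Finset.prod_insert (fun h => ha (Finset.mem_of_mem_erase h)), mul_assoc]
    rw [Finset.sum_congr rfl hh, ← Finset.mul_sum]
    ring

def act (p : B n) : Finset (Fin n) := Finset.univ.filter fun i => Odd (p.1 i) ∧ i ∉ p.2

def flp (i : Fin n) (p : B n) : B n := (Function.update p.1 i (p.1 i - 1), insert i p.2)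

def up (i : Fin n) (p : B n) : B n := (Function.update p.1 i (p.1 i + 1), p.2.erase i)

lemma prod_x_update (a : Fin n → ℕ) (i : Fin n) (m : ℕ) :
    (∏ j, x n j ^ Function.update a i m j)
      = x n i ^ m * ∏ j ∈ Finset.univ.erase i, x n j ^ a j := by
  have hfun : (fun j => x n j ^ Function.update a i m j)
      = Function.update (fun j => x n j ^ a j) i (x n i ^ m) := by
    funext j
    rcases eq_or_ne j i with rfl | hj
    · simp
    · simp [Function.update_of_ne hj]
  rw [hfun, Finset.prod_update_of_mem (Finset.mem_univ i), Finset.sdiff_singleton_eq_erase]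

lemma σ_v (σ : Derivation F₂ (R n) (R n)) (hx : ∀ i, σ (x n i) = e n i)
    (he : ∀ i, σ (e n i) = 0) (p : B n) :
    σ (v n p) = ∑ i ∈ act p, v n (flp i p) := by
  have hB : σ (∏ i ∈ p.2, e n i) = 0 := by
    rw [D_prod σ]
    exact Finset.sum_eq_zero fun i _ => by rw [he i, mul_zero]
  rw [v, Derivation.leibniz, hB, smul_zero, zero_add, smul_eq_mul,
    D_prod σ Finset.univ, Finset.mul_sum]
  have hterm : ∀ i ∈ Finset.univ,
      (∏ j ∈ p.2, e n j) * ((∏ j ∈ Finset.univ.erase i, x n j ^ p.1 j) * σ (x n i ^ p.1 i))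
        = if i ∈ act p then v n (flp i p) else 0 := by
    intro i _
    rw [Derivation.leibniz_pow, hx i, smul_eq_mul]
    by_cases hodd : Odd (p.1 i)
    · rw [odd_nsmul hodd]
      by_cases hiT : i ∈ p.2
      · rw [if_neg (by simp [act, hiT])]
        rw [← Finset.mul_prod_erase p.2 _ hiT]
        have hre : (e n i * ∏ j ∈ p.2.erase i, e n j) *
            ((∏ j ∈ Finset.univ.erase i, x n j ^ p.1 j) * (x n i ^ (p.1 i - 1) * e n i))
            = (e n i * e n i) * ((∏ j ∈ p.2.erase i, e n j) *
              ((∏ j ∈ Finset.univ.erase i, x n j ^ p.1 j) * x n i ^ (p.1 i - 1))) := by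
          ring
        rw [hre, esq, zero_mul]
      · rw [if_pos (by simp [act, hodd, hiT])]
        rw [v, show (flp i p).1 = Function.update p.1 i (p.1 i - 1) from rfl,
          show (flp i p).2 = insert i p.2 from rfl, Finset.prod_insert hiT,
          prod_x_update]
        ring
    · rw [even_nsmul hodd, mul_zero, mul_zero, if_neg (by simp [act, hodd])]
  rw [Finset.sum_congr rfl hterm, Finset.sum_ite_mem, Finset.univ_inter]

lemma σ_bR (σ : Derivation F₂ (R n) (R n)) (hx : ∀ i, σ (x n i) = e n i)
    (he : ∀ i, σ (e n i) = 0) (p : B n) :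
    σ (bR n p) = ∑ i ∈ act p, bR n (flp i p) := by
  rw [bR_apply, σ_v σ hx he]
  exact Finset.sum_congr rfl fun i _ => (bR_apply _).symm


def harmAt (p : B n) (i : Fin n) : Prop := i ∈ p.2 ↔ Odd (p.1 i)

instance (p : B n) (i : Fin n) : Decidable (harmAt p i) :=
  inferInstanceAs (Decidable (_ ↔ _))

def bad (p : B n) : Finset (Fin n) := Finset.univ.filter fun i => ¬ harmAt p i

lemma act_subset_bad (p : B n) : act p ⊆ bad p := by
  intro i hi
  simp only [act, Finset.mem_filter, Finset.mem_univ, true_and] at hi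
  simp only [bad, Finset.mem_filter, Finset.mem_univ, true_and]
  unfold harmAt
  intro h
  exact hi.2 (h.2 hi.1)

lemma act_empty_of_bad_empty {p : B n} (h : bad p = ∅) : act p = ∅ :=
  Finset.subset_empty.1 (h ▸ act_subset_bad p)

lemma mem_act {p : B n} {i : Fin n} : i ∈ act p ↔ Odd (p.1 i) ∧ i ∉ p.2 := by
  simp [act]

lemma mem_bad {p : B n} {i : Fin n} : i ∈ bad p ↔ ¬ harmAt p i := by
  simp [bad]

lemma bad_flp {p : B n} {i : Fin n} (hi : i ∈ act p) : bad (flp i p) = bad p := by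
  obtain ⟨hodd, hiT⟩ := mem_act.1 hi
  have heven : Even (p.1 i - 1) := Nat.Odd.sub_odd hodd odd_one
  ext k
  rw [mem_bad, mem_bad]
  rcases eq_or_ne k i with rfl | hk
  · simp only [harmAt, flp, Function.update_self, Finset.mem_insert]
    constructor
    · intro _; intro h; exact hiT (h.2 hodd)
    · intro _; intro h
      exact (Nat.not_odd_iff_even.2 heven) (h.1 (by simp))
  · simp only [harmAt, flp, Function.update_of_ne hk, Finset.mem_insert, hk, false_or]

lemma act_up {p : B n} {j : Fin n} (hjT : j ∈ p.2) (hodd : ¬ Odd (p.1 j)) :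
    act (up j p) = insert j (act p) := by
  have heven : Even (p.1 j) := Nat.not_odd_iff_even.1 hodd
  ext k
  rw [mem_act, Finset.mem_insert, mem_act]
  rcases eq_or_ne k j with rfl | hk
  · simp only [up, Function.update_self, Finset.notMem_erase, not_false_iff, and_true]
    simp [heven.add_one]
  · simp only [up, Function.update_of_ne hk, Finset.mem_erase, hk, true_and, false_or,
      not_and]
    constructor
    · intro ⟨h1, h2⟩; exact ⟨h1, fun hT => h2 hk hT⟩
    · intro ⟨h1, h2⟩; exact ⟨h1, fun _ hT => h2 hT⟩

lemma flp_up {p : B n} {j : Fin n} (hjT : j ∈ p.2) : flp j (up j p) = p := by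
  obtain ⟨a, T⟩ := p
  simp only [flp, up, Prod.mk.injEq]
  constructor
  · funext k
    rcases eq_or_ne k j with rfl | hk
    · simp
    · simp [Function.update_of_ne hk]
  · exact Finset.insert_erase hjT

lemma up_flp {p : B n} {j : Fin n} (hodd : Odd (p.1 j)) (hjT : j ∉ p.2) :
    up j (flp j p) = p := by
  obtain ⟨a, T⟩ := p
  simp only [flp, up, Prod.mk.injEq]
  constructor
  · funext k
    rcases eq_or_ne k j with rfl | hk
    · simp only [Function.update_self]
      have : 1 ≤ a k := hodd.pos
      omega
    · simp [Function.update_of_ne hk]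
  · exact Finset.erase_insert hjT

lemma flp_up_comm {p : B n} {i j : Fin n} (hij : i ≠ j) :
    flp i (up j p) = up j (flp i p) := by
  obtain ⟨a, T⟩ := p
  simp only [flp, up, Prod.mk.injEq]
  constructor
  · rw [Function.update_of_ne hij, Function.update_of_ne hij.symm]
    exact Function.update_comm hij.symm _ _ _
  · ext k
    simp only [Finset.mem_insert, Finset.mem_erase]
    rcases eq_or_ne k i with rfl | hk
    · simp [hij]
    · simp only [hk, false_or]

/-- The contracting homotopy on basis monomials. -/
noncomputable def hfun (p : B n) : R n :=
  if h : (bad p).Nonempty then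
    if Odd (p.1 ((bad p).min' h)) then 0 else v n (up ((bad p).min' h) p)
  else 0

lemma hfun_eq {p : B n} (h : (bad p).Nonempty) :
    hfun p = if Odd (p.1 ((bad p).min' h)) then 0
      else v n (up ((bad p).min' h) p) := dif_pos h

lemma hfun_eq_zero {p : B n} (h : ¬ (bad p).Nonempty) : hfun p = 0 := dif_neg h

lemma min'_congr {s t : Finset (Fin n)} (h : s = t) (hs : s.Nonempty) (ht : t.Nonempty) :
    s.min' hs = t.min' ht := by subst h; rfl

/-- Projection onto harmonic basis monomials. -/
noncomputable def πfun (p : B n) : R n := if bad p = ∅ then v n p else 0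

noncomputable def hm (n : ℕ) : R n →ₗ[F₂] R n := (bR n).constr F₂ fun p => hfun p

noncomputable def πm (n : ℕ) : R n →ₗ[F₂] R n := (bR n).constr F₂ fun p => πfun p

lemma hm_basis (p : B n) : hm n (bR n p) = hfun p := Module.Basis.constr_basis _ _ _ _

lemma πm_basis (p : B n) : πm n (bR n p) = πfun p := Module.Basis.constr_basis _ _ _ _

theorem homotopy (σ : Derivation F₂ (R n) (R n)) (hx : ∀ i, σ (x n i) = e n i)
    (he : ∀ i, σ (e n i) = 0) (r : R n) :
    σ (hm n r) + hm n (σ r) + πm n r = r := by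
  have hmaps : σ.toLinearMap ∘ₗ hm n + hm n ∘ₗ σ.toLinearMap + πm n = LinearMap.id := by
    apply Module.Basis.ext (bR n)
    intro p
    simp only [LinearMap.add_apply, LinearMap.coe_comp, Function.comp_apply,
      LinearMap.id_apply, Derivation.coeFn_coe]
    by_cases hbe : bad p = ∅
    · have hact : act p = ∅ := act_empty_of_bad_empty hbe
      have h1 : σ (bR n p) = 0 := by rw [σ_bR σ hx he, hact, Finset.sum_empty]
      have h2 : hm n (bR n p) = 0 := by
        rw [hm_basis, hfun_eq_zero (by simp [hbe])]
      rw [h1, h2, map_zero, map_zero, zero_add, zero_add, πm_basis, πfun, if_pos hbe,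
        bR_apply]
    · have hne : (bad p).Nonempty := Finset.nonempty_iff_ne_empty.2 hbe
      set j := (bad p).min' hne with hjdef
      have hjbad : j ∈ bad p := Finset.min'_mem _ _
      have hjn : ¬ harmAt p j := mem_bad.1 hjbad
      have hπ : πm n (bR n p) = 0 := by rw [πm_basis, πfun, if_neg hbe]
      by_cases hodd : Odd (p.1 j)
      · -- S case: the minimal bad index is "odd exponent, not in T"
        have hjT : j ∉ p.2 := fun h => hjn (iff_of_true h hodd)
        have hjact : j ∈ act p := mem_act.2 ⟨hodd, hjT⟩
        have h2 : hm n (bR n p) = 0 := by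
          rw [hm_basis, hfun_eq hne, if_pos (by rw [← hjdef]; exact hodd)]
        have h3 : hm n (σ (bR n p)) = bR n p := by
          rw [σ_bR σ hx he, map_sum]
          rw [Finset.sum_congr rfl fun i _ => hm_basis (flp i p)]
          rw [Finset.sum_eq_single_of_mem j hjact ?side]
          case side =>
            intro i hi hij
            have hb2 : bad (flp i p) = bad p := bad_flp hi
            have hne2 : (bad (flp i p)).Nonempty := by rw [hb2]; exact hne
            have hm2 : (bad (flp i p)).min' hne2 = j := min'_congr hb2 hne2 hne
            rw [hfun_eq hne2, hm2, if_pos]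
            show Odd ((flp i p).1 j)
            show Odd (Function.update p.1 i (p.1 i - 1) j)
            rw [Function.update_of_ne (Ne.symm hij)]
            exact hodd
          · have hb2 : bad (flp j p) = bad p := bad_flp hjact
            have hne2 : (bad (flp j p)).Nonempty := by rw [hb2]; exact hne
            have hm2 : (bad (flp j p)).min' hne2 = j := min'_congr hb2 hne2 hne
            rw [hfun_eq hne2, hm2, if_neg, up_flp hodd hjT, bR_apply]
            show ¬ Odd (Function.update p.1 j (p.1 j - 1) j)
            rw [Function.update_self, Nat.not_odd_iff_even]
            exact Nat.Odd.sub_odd hodd odd_one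
        rw [h2, map_zero, h3, hπ, zero_add, add_zero]
      · -- U case: the minimal bad index is "even exponent, in T"
        have hjT : j ∈ p.2 := by
          by_contra h
          exact hjn (iff_of_false h hodd)
        have hjnact : j ∉ act p := fun h => hodd (mem_act.1 h).1
        set q := up j p with hqdef
        have hfp : hfun p = v n q := by
          rw [hfun_eq hne, if_neg (by rw [← hjdef]; exact hodd), ← hjdef]
        have h1 : σ (hm n (bR n p)) = bR n p + ∑ i ∈ act p, bR n (flp i q) := by
          rw [hm_basis, hfp, ← bR_apply, σ_bR σ hx he, act_up hjT hodd,
            Finset.sum_insert hjnact, flp_up hjT]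
        have h2 : hm n (σ (bR n p)) = ∑ i ∈ act p, bR n (flp i q) := by
          rw [σ_bR σ hx he, map_sum]
          rw [Finset.sum_congr rfl fun i _ => hm_basis (flp i p)]
          refine Finset.sum_congr rfl fun i hi => ?_
          have hij : i ≠ j := fun h => hjnact (h ▸ hi)
          have hb2 : bad (flp i p) = bad p := bad_flp hi
          have hne2 : (bad (flp i p)).Nonempty := by rw [hb2]; exact hne
          have hm2 : (bad (flp i p)).min' hne2 = j := min'_congr hb2 hne2 hne
          rw [hfun_eq hne2, hm2, if_neg, ← flp_up_comm hij, ← hqdef, bR_apply]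
          show ¬ Odd (Function.update p.1 i (p.1 i - 1) j)
          rw [Function.update_of_ne (Ne.symm hij)]
          exact hodd
        rw [h1, h2, hπ, add_zero, add_assoc, addSelf, add_zero]
  have := LinearMap.congr_fun hmaps r
  simpa using this


/-! ### Harmonic monomials -/

def ρ (p : B n) : B n := (fun i => 2 * p.1 i + (if i ∈ p.2 then 1 else 0), p.2)

lemma harm_ρ (p : B n) (i : Fin n) : harmAt (ρ p) i := by
  show i ∈ p.2 ↔ Odd (2 * p.1 i + (if i ∈ p.2 then 1 else 0))
  by_cases h : i ∈ p.2
  · rw [if_pos h]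
    exact iff_of_true h ⟨p.1 i, by ring⟩
  · rw [if_neg h]
    refine iff_of_false h ?_
    rintro ⟨k, hk⟩
    omega

lemma bad_ρ (p : B n) : bad (ρ p) = ∅ :=
  Finset.eq_empty_iff_forall_notMem.2 fun i hi => (mem_bad.1 hi) (harm_ρ p i)

lemma ρ_inj : Function.Injective (ρ (n := n)) := by
  intro p q h
  obtain ⟨hf, hs⟩ := Prod.ext_iff.1 h
  have h2 : p.2 = q.2 := hs
  have h1 : ∀ i, 2 * p.1 i + (if i ∈ p.2 then 1 else 0)
      = 2 * q.1 i + (if i ∈ q.2 then 1 else 0) := fun i => congrFun hf i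
  have h1' : p.1 = q.1 := by
    funext i
    have := h1 i
    rw [h2] at this
    by_cases hi : i ∈ q.2 <;> simp only [hi, if_true, if_false] at this <;> omega
  exact Prod.ext_iff.2 ⟨h1', h2⟩

lemma harm_of_bad_empty {q : B n} (h : bad q = ∅) (i : Fin n) : harmAt q i := by
  by_contra hc
  have : i ∈ bad q := mem_bad.2 hc
  rw [h] at this
  simp at this

lemma ρ_surj_harm {q : B n} (h : bad q = ∅) : ∃ p : B n, ρ p = q := by
  refine ⟨(fun i => q.1 i / 2, q.2), ?_⟩
  have hfst : (fun i => 2 * (q.1 i / 2) + (if i ∈ q.2 then 1 else 0)) = q.1 := by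
    funext i
    have hh := harm_of_bad_empty h i
    unfold harmAt at hh
    by_cases hi : i ∈ q.2
    · have : Odd (q.1 i) := hh.1 hi
      rw [Nat.odd_iff] at this
      simp only [hi, if_true]
      omega
    · have : ¬ Odd (q.1 i) := fun ho => hi (hh.2 ho)
      rw [Nat.odd_iff] at this
      simp only [hi, if_false]
      omega
  exact Prod.ext_iff.2 ⟨hfst, rfl⟩

lemma mono_eq (p : B n) : mono n p = v n (ρ p) := by
  rw [mono, v]
  have h1 : (∏ i, x n i ^ (ρ p).1 i)
      = (∏ i, x n i ^ (2 * p.1 i)) * ∏ i ∈ p.2, x n i := by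
    have : ∀ i : Fin n, x n i ^ (ρ p).1 i
        = x n i ^ (2 * p.1 i) * x n i ^ (if i ∈ p.2 then 1 else 0) := fun i => by
      rw [← pow_add]; rfl
    rw [Finset.prod_congr rfl fun i _ => this i, Finset.prod_mul_distrib]
    congr 1
    simp only [pow_ite, pow_one, pow_zero]
    rw [Finset.prod_ite_mem, Finset.univ_inter]
  rw [show (ρ p).2 = p.2 from rfl, h1, Finset.prod_mul_distrib]
  ring

lemma σ_mono (σ : Derivation F₂ (R n) (R n)) (hx : ∀ i, σ (x n i) = e n i)
    (he : ∀ i, σ (e n i) = 0) (p : B n) : σ (mono n p) = 0 := by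
  rw [mono_eq, ← bR_apply, σ_bR σ hx he, act_empty_of_bad_empty (bad_ρ p),
    Finset.sum_empty]

/-! ### The harmonic-coordinates map -/

noncomputable def cmap (n : ℕ) : R n →ₗ[F₂] (B n →₀ F₂) :=
  Finsupp.lcomapDomain ρ ρ_inj ∘ₗ ((bR n).repr : R n →ₗ[F₂] (B n →₀ F₂))

lemma cmap_apply (r : R n) (p : B n) : cmap n r p = (bR n).repr r (ρ p) := rfl

lemma cmap_bR_ρ (p : B n) : cmap n (bR n (ρ p)) = Finsupp.single p 1 := by
  ext p'
  rw [cmap_apply, Module.Basis.repr_self]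
  rcases eq_or_ne p' p with rfl | hne
  · simp
  · rw [Finsupp.single_eq_of_ne fun hc => hne (ρ_inj hc),
      Finsupp.single_eq_of_ne hne]

lemma cmap_bR_nonharm {q : B n} (hq : bad q ≠ ∅) : cmap n (bR n q) = 0 := by
  ext p'
  rw [cmap_apply, Module.Basis.repr_self, Finsupp.single_eq_of_ne fun hc => hq (by rw [← hc]; exact bad_ρ p')]
  simp

lemma cmap_σ (σ : Derivation F₂ (R n) (R n)) (hx : ∀ i, σ (x n i) = e n i)
    (he : ∀ i, σ (e n i) = 0) (r : R n) : cmap n (σ r) = 0 := by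
  have hmaps : cmap n ∘ₗ σ.toLinearMap = 0 := by
    apply Module.Basis.ext (bR n)
    intro p
    simp only [LinearMap.coe_comp, Function.comp_apply, LinearMap.zero_apply,
      Derivation.coeFn_coe]
    rw [σ_bR σ hx he, map_sum]
    refine Finset.sum_eq_zero fun i hi => ?_
    refine cmap_bR_nonharm ?_
    rw [bad_flp hi]
    exact Finset.ne_empty_of_mem (act_subset_bad p hi)
  exact LinearMap.congr_fun hmaps r

lemma πm_eq_zero_of_cmap_zero {r : R n} (hc : cmap n r = 0) : πm n r = 0 := by
  rw [πm, Module.Basis.constr_apply, Finsupp.sum]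
  refine Finset.sum_eq_zero fun q hq => ?_
  by_cases hbq : bad q = ∅
  · obtain ⟨p, rfl⟩ := ρ_surj_harm hbq
    have : (bR n).repr r (ρ p) = 0 := by
      rw [← cmap_apply, hc]; rfl
    rw [this, zero_smul]
  · rw [πfun, if_neg hbq, smul_zero]

lemma mem_range_of_cycle (σ : Derivation F₂ (R n) (R n)) (hx : ∀ i, σ (x n i) = e n i)
    (he : ∀ i, σ (e n i) = 0) {z : R n} (hz : σ z = 0) (hc : cmap n z = 0) :
    z ∈ LinearMap.range σ.toLinearMap := by
  have hh := homotopy σ hx he z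
  rw [hz, map_zero, add_zero, πm_eq_zero_of_cmap_zero hc, add_zero] at hh
  exact ⟨hm n z, hh⟩

/-! ### Construction of the derivation -/

noncomputable def σ₀ (n : ℕ) : Derivation F₂ (MvPolynomial (Fin n ⊕ Fin n) F₂) (R n) :=
  MvPolynomial.mkDerivation F₂ (Sum.elim (fun i => e n i) fun _ => 0)

lemma sq_mem_Isq (i : Fin n) : (X (Sum.inr i) : MvPolynomial (Fin n ⊕ Fin n) F₂) ^ 2 ∈ Isq n :=
  Ideal.subset_span ⟨i, rfl⟩

lemma σ₀_Isq {q : MvPolynomial (Fin n ⊕ Fin n) F₂} (hq : q ∈ Isq n) : σ₀ n q = 0 := by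
  rw [Isq, Ideal.mem_span_range_iff_exists_fun] at hq
  obtain ⟨c, rfl⟩ := hq
  rw [map_sum]
  refine Finset.sum_eq_zero fun i _ => ?_
  rw [Derivation.leibniz, sq, Derivation.leibniz]
  have hX : σ₀ n (X (Sum.inr i)) = 0 := by
    rw [σ₀, MvPolynomial.mkDerivation_X]; rfl
  rw [hX, smul_zero, add_zero, smul_zero, zero_add,
    show (X (Sum.inr i) * X (Sum.inr i)) • σ₀ n (c i)
      = Ideal.Quotient.mk (Isq n) (X (Sum.inr i) * X (Sum.inr i)) * σ₀ n (c i) from rfl,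
    show Ideal.Quotient.mk (Isq n) (X (Sum.inr i) * X (Sum.inr i)) = 0 by
      rw [Ideal.Quotient.eq_zero_iff_mem, ← sq]; exact sq_mem_Isq i,
    zero_mul]

lemma exists_pre_p {ν : (Fin n ⊕ Fin n) →₀ ℕ} (hsq : ∀ j, ν (Sum.inr j) ≤ 1) :
    ∃ p : B n, μ p = ν := by
  refine ⟨(fun i => ν (Sum.inl i), Finset.univ.filter fun i => ν (Sum.inr i) = 1), ?_⟩
  ext s
  rcases s with i | j
  · rfl
  · simp only [μ_inr, Finset.mem_filter, Finset.mem_univ, true_and]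
    have := hsq j
    split <;> omega

noncomputable def Lc (n : ℕ) : R n →ₗ[F₂] R n :=
  (bR n).constr F₂ fun p => σ₀ n (monomial (μ p) 1)

lemma Lc_mk (q : MvPolynomial (Fin n ⊕ Fin n) F₂) :
    Lc n (Ideal.Quotient.mk (Isq n) q) = σ₀ n q := by
  induction q using MvPolynomial.induction_on' with
  | add q₁ q₂ h₁ h₂ => rw [map_add, map_add, map_add, h₁, h₂]
  | monomial ν c =>
    have hc : (monomial ν c : MvPolynomial (Fin n ⊕ Fin n) F₂) = c • monomial ν 1 := by
      rw [smul_monomial, smul_eq_mul, mul_one]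
    rw [hc, mk_smul, map_smul, Derivation.map_smul]
    congr 1
    by_cases hsq : ∀ j, ν (Sum.inr j) ≤ 1
    · obtain ⟨p, hp⟩ := exists_pre_p hsq
      rw [← hp, ← v_eq_mk, ← bR_apply, Lc, Module.Basis.constr_basis]
    · push_neg at hsq
      obtain ⟨j, hj⟩ := hsq
      rw [Ideal.Quotient.eq_zero_iff_mem.2 (monomial_ne_sq j hj 1), map_zero,
        σ₀_Isq (monomial_ne_sq j hj 1)]

noncomputable def σc (n : ℕ) : Derivation F₂ (R n) (R n) where
  toLinearMap := Lc n
  map_one_eq_zero' := by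
    have h1 : (1 : R n) = Ideal.Quotient.mk (Isq n) 1 := rfl
    show Lc n 1 = 0
    rw [h1, Lc_mk, Derivation.map_one_eq_zero]
  leibniz' a b := by
    obtain ⟨qa, rfl⟩ := Ideal.Quotient.mk_surjective a
    obtain ⟨qb, rfl⟩ := Ideal.Quotient.mk_surjective b
    show Lc n (Ideal.Quotient.mk (Isq n) qa * Ideal.Quotient.mk (Isq n) qb) = _
    rw [← map_mul, Lc_mk, Derivation.leibniz]
    show qa • σ₀ n qb + qb • σ₀ n qa = _
    rw [show qa • σ₀ n qb = Ideal.Quotient.mk (Isq n) qa * σ₀ n qb from rfl,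
      show qb • σ₀ n qa = Ideal.Quotient.mk (Isq n) qb * σ₀ n qa from rfl,
      smul_eq_mul, smul_eq_mul, Lc_mk, Lc_mk]

lemma σc_x (i : Fin n) : σc n (x n i) = e n i := by
  show Lc n (Ideal.Quotient.mk (Isq n) (X (Sum.inl i))) = e n i
  rw [Lc_mk, σ₀, MvPolynomial.mkDerivation_X]
  rfl

lemma σc_e (i : Fin n) : σc n (e n i) = 0 := by
  show Lc n (Ideal.Quotient.mk (Isq n) (X (Sum.inr i))) = 0
  rw [Lc_mk, σ₀, MvPolynomial.mkDerivation_X]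
  rfl

/-! ### Uniqueness -/

lemma adjoin_gens :
    Algebra.adjoin F₂ (Set.range (x n) ∪ Set.range (e n)) = ⊤ := by
  have hsurj : Function.Surjective (Ideal.Quotient.mkₐ F₂ (Isq n)) :=
    Ideal.Quotient.mkₐ_surjective F₂ _
  have himg : (Ideal.Quotient.mkₐ F₂ (Isq n)) '' (Set.range X)
      = Set.range (x n) ∪ Set.range (e n) := by
    rw [← Set.range_comp]
    have : (⇑(Ideal.Quotient.mkₐ F₂ (Isq n)) ∘ X) = Sum.elim (fun i => x n i) (e n) :=
      funext fun s => by cases s <;> rfl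
    rw [this, Set.Sum.elim_range]
  rw [← himg, ← AlgHom.map_adjoin, MvPolynomial.adjoin_range_X, Algebra.map_top]
  rwa [AlgHom.range_eq_top]

lemma der_unique {σ' σ'' : Derivation F₂ (R n) (R n)}
    (hx' : ∀ i, σ' (x n i) = e n i) (he' : ∀ i, σ' (e n i) = 0)
    (hx'' : ∀ i, σ'' (x n i) = e n i) (he'' : ∀ i, σ'' (e n i) = 0) : σ' = σ'' := by
  refine Derivation.ext_of_adjoin_eq_top _ adjoin_gens ?_
  rintro r (⟨i, rfl⟩ | ⟨i, rfl⟩)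
  · rw [hx' i, hx'' i]
  · rw [he' i, he'' i]

lemma σσ_zero (σ : Derivation F₂ (R n) (R n)) (hx : ∀ i, σ (x n i) = e n i)
    (he : ∀ i, σ (e n i) = 0) (r : R n) : σ (σ r) = 0 := by
  let D2 : Derivation F₂ (R n) (R n) :=
    { toLinearMap := σ.toLinearMap ∘ₗ σ.toLinearMap
      map_one_eq_zero' := by
        show σ (σ 1) = 0
        rw [Derivation.map_one_eq_zero, map_zero]
      leibniz' := fun a b => by
        show σ (σ (a * b)) = a • σ (σ b) + b • σ (σ a)
        have hz : σ b * σ a + σ a * σ b = 0 := by rw [mul_comm]; exact addSelf _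
        rw [Derivation.leibniz, map_add]
        simp only [smul_eq_mul]
        rw [Derivation.leibniz, Derivation.leibniz]
        simp only [smul_eq_mul]
        linear_combination hz }
  have hD2 : D2 = 0 := by
    refine Derivation.ext_of_adjoin_eq_top _ adjoin_gens ?_
    rintro r (⟨i, rfl⟩ | ⟨i, rfl⟩)
    · show σ (σ (x n i)) = (0 : Derivation F₂ (R n) (R n)) (x n i)
      rw [hx i, he i, Derivation.coe_zero, Pi.zero_apply]
    · show σ (σ (e n i)) = (0 : Derivation F₂ (R n) (R n)) (e n i)
      rw [he i, map_zero, Derivation.coe_zero, Pi.zero_apply]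
  have : D2 r = (0 : Derivation F₂ (R n) (R n)) r := by rw [hD2]
  simpa [D2] using this

end Prop43

/-- Proposition 4.3 (algebraic part): the `σ`-homology of `P(x₁,…,x_n) ⊗ E(e₁,…,e_n)` is
`P(x₁²,…,x_n²) ⊗ E(x₁e₁,…,x_ne_n)`. -/
theorem sigma_homology_THH_yn (n : ℕ) (hn : 1 ≤ n) :
    (∃! σ : Derivation F₂ (R n) (R n),
        (∀ i, σ (x n i) = e n i) ∧ ∀ i, σ (e n i) = 0) ∧
    (∀ σ : Derivation F₂ (R n) (R n),
      ((∀ i, σ (x n i) = e n i) ∧ ∀ i, σ (e n i) = 0) →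
        (∀ r : R n, σ (σ r) = 0) ∧
        (∀ p : (Fin n → ℕ) × Finset (Fin n), mono n p ∈ LinearMap.ker σ.toLinearMap) ∧
        ∃ b : Module.Basis ((Fin n → ℕ) × Finset (Fin n)) F₂
            (LinearMap.ker σ.toLinearMap ⧸
              (LinearMap.range σ.toLinearMap).comap (LinearMap.ker σ.toLinearMap).subtype),
          ∀ (p : (Fin n → ℕ) × Finset (Fin n)) (h : mono n p ∈ LinearMap.ker σ.toLinearMap),
            b p = Submodule.Quotient.mk ⟨mono n p, h⟩) := by
  constructor
  · exact ⟨Prop43.σc n, ⟨fun i => Prop43.σc_x i, fun i => Prop43.σc_e i⟩,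
      fun σ' h => Prop43.der_unique h.1 h.2 (fun i => Prop43.σc_x i) fun i => Prop43.σc_e i⟩
  · rintro σ ⟨hx, he⟩
    refine ⟨Prop43.σσ_zero σ hx he,
      fun p => LinearMap.mem_ker.2 (Prop43.σ_mono σ hx he p), ?_⟩
    set K := LinearMap.ker σ.toLinearMap with hK
    set Rg := (LinearMap.range σ.toLinearMap).comap K.subtype with hRgdef
    have hcyc : ∀ p : Prop43.B n, mono n p ∈ K :=
      fun p => LinearMap.mem_ker.2 (Prop43.σ_mono σ hx he p)
    have hle : Rg ≤ LinearMap.ker (Prop43.cmap n ∘ₗ K.subtype) := by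
      rintro ⟨z, hz⟩ hmem
      obtain ⟨w, hw⟩ := Submodule.mem_comap.1 hmem
      rw [LinearMap.mem_ker]
      show Prop43.cmap n z = 0
      have hw' : σ w = z := hw
      rw [← hw']
      exact Prop43.cmap_σ σ hx he w
    set Φ := Submodule.liftQ Rg (Prop43.cmap n ∘ₗ K.subtype) hle with hΦdef
    have hΦmk : ∀ z : K, Φ (Submodule.Quotient.mk z) = Prop43.cmap n z.1 := fun z => rfl
    have hsingle : ∀ p : Prop43.B n,
        Φ (Submodule.Quotient.mk ⟨mono n p, hcyc p⟩) = Finsupp.single p 1 := by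
      intro p
      rw [hΦmk]
      show Prop43.cmap n (mono n p) = _
      rw [Prop43.mono_eq, ← Prop43.bR_apply, Prop43.cmap_bR_ρ]
    have hinj : Function.Injective Φ := by
      rw [← LinearMap.ker_eq_bot, Submodule.eq_bot_iff]
      intro z hz
      obtain ⟨w, rfl⟩ := Submodule.Quotient.mk_surjective _ z
      rw [LinearMap.mem_ker, hΦmk] at hz
      rw [Submodule.Quotient.mk_eq_zero]
      exact Submodule.mem_comap.2
        (Prop43.mem_range_of_cycle σ hx he (show σ w.1 = 0 from w.2) hz)
    have hsurj : Function.Surjective Φ := by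
      rw [← LinearMap.range_eq_top, eq_top_iff,
        ← (Finsupp.basisSingleOne (R := F₂) (ι := Prop43.B n)).span_eq, Submodule.span_le]
      rintro _ ⟨p, rfl⟩
      have hb1 : (Finsupp.basisSingleOne (R := F₂) (ι := Prop43.B n)) p
          = Finsupp.single p 1 := rfl
      rw [hb1]
      exact ⟨Submodule.Quotient.mk ⟨mono n p, hcyc p⟩, hsingle p⟩
    refine ⟨Module.Basis.ofRepr (LinearEquiv.ofBijective Φ ⟨hinj, hsurj⟩), ?_⟩
    intro p h
    apply (LinearEquiv.ofBijective Φ ⟨hinj, hsurj⟩).injective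
    have h1 : (LinearEquiv.ofBijective Φ ⟨hinj, hsurj⟩)
        ((Module.Basis.ofRepr (LinearEquiv.ofBijective Φ ⟨hinj, hsurj⟩)) p) = Finsupp.single p 1 :=
      (Module.Basis.ofRepr (LinearEquiv.ofBijective Φ ⟨hinj, hsurj⟩)).repr_self p
    have h2 : (LinearEquiv.ofBijective Φ ⟨hinj, hsurj⟩)
        (Submodule.Quotient.mk ⟨mono n p, h⟩) = Finsupp.single p 1 := hsingle p
    rw [h1, h2]
end

section
/- Fix n ≥ 1 and let σ be the unique F₂-derivation of R with σ(x_i) = e_i and σ(e_i) = 0. Let D be the unique F₂-derivation of the polynomial ring R[t] (Polynomial R) satisfying D(C(x_i)) = C(e_i)·t, D(C(e_i)) = 0 and D(t) = 0; explicitly, D(∑_k r_k t^k) = ∑_k σ(r_k) t^(k+1). Then: (a) ker D = { f ∈ R[t] : every coefficient of f lies in ker σ }; (b) range D = { f ∈ R[t] : the constant coefficient of f is 0 and every coefficient of f lies in range σ }. Consequently ker D ⧸ range D decomposes as (ker σ in t-degree 0) plus a copy of ker σ ⧸ range σ in each t-degree k ≥ 1, recovering the E³ = E^∞-page, including its simple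 t-torsion summand T, of the homological homotopy fixed point spectral sequence computed in Proposition 5.2 of the paper. -/
/-!
The derivations `r ↦ D (C r)` and `r ↦ C (σ r) * t` of `R n` into `(R n)[t]` agree on the
generators `x_i`, `e_i`, hence everywhere. Together with `D t = 0` this gives
`D (r t^k) = σ(r) t^(k+1)`: `D` is `σ` applied coefficientwise followed by multiplication by `t`,
so its kernel and image are read off coefficient by coefficient.
-/

open MvPolynomial

set_option synthInstance.maxHeartbeats 1000000
set_option maxHeartbeats 2000000

theorem MvPolynomial.adjoin_range_comp_X_eq_top {ι k A : Type*} [CommSemiring k] [Semiring A]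
    [Algebra k A] {f : MvPolynomial ι k →ₐ[k] A} (hf : Function.Surjective f) :
    Algebra.adjoin k (Set.range (f ∘ X)) = ⊤ := by
  rw [Set.range_comp, ← AlgHom.map_adjoin, adjoin_range_X, Algebra.map_top,
    (AlgHom.range_eq_top f).2 hf]

namespace Polynomial

variable {k A : Type*} [CommSemiring k] [CommSemiring A] [Algebra k A]
  {σ : Derivation k A A} {D : Derivation k A[X] A[X]}

theorem exists_forall_map_coeff_eq {B : Type*} [Semiring B] {φ : A → B} (hφ : φ 0 = 0)
    (p : B[X]) (hp : ∀ m, ∃ a, φ a = p.coeff m) : ∃ q : A[X], ∀ m, φ (q.coeff m) = p.coeff m := by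
  choose r hr using hp
  refine ⟨∑ m ∈ p.support, monomial m (r m), fun m => ?_⟩
  simp only [finsetSum_coeff, coeff_monomial, Finset.sum_ite_eq']
  split_ifs with hm
  · exact hr m
  · rw [hφ, notMem_support_iff.1 hm]

theorem derivation_monomial (hC : ∀ a, D (C a) = C (σ a) * X) (hX : D X = 0) (m : ℕ) (a : A) :
    D (monomial m a) = monomial (m + 1) (σ a) := by
  rw [← C_mul_X_pow_eq_monomial, D.leibniz, D.leibniz_pow, hX, hC, ← C_mul_X_pow_eq_monomial]
  simp only [smul_eq_mul]
  ring

theorem coeff_derivation_succ (hC : ∀ a, D (C a) = C (σ a) * X) (hX : D X = 0) (f : A[X])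
    (m : ℕ) : (D f).coeff (m + 1) = σ (f.coeff m) := by
  induction f using Polynomial.induction_on' with
  | add p q hp hq => simp only [map_add, coeff_add, hp, hq]
  | monomial j a =>
    rw [derivation_monomial hC hX, coeff_monomial, coeff_monomial]
    by_cases h : j = m <;> simp [h]

theorem coeff_derivation_zero (hC : ∀ a, D (C a) = C (σ a) * X) (hX : D X = 0) (f : A[X]) :
    (D f).coeff 0 = 0 := by
  induction f using Polynomial.induction_on' with
  | add p q hp hq => simp only [map_add, coeff_add, hp, hq, add_zero]
  | monomial j a => rw [derivation_monomial hC hX, coeff_monomial, if_neg j.succ_ne_zero]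

theorem derivation_eq_zero_iff (hC : ∀ a, D (C a) = C (σ a) * X) (hX : D X = 0) (f : A[X]) :
    D f = 0 ↔ ∀ m, σ (f.coeff m) = 0 := by
  refine ⟨fun h m => ?_, fun h => ext fun m => ?_⟩
  · rw [← coeff_derivation_succ hC hX, h, coeff_zero]
  · cases m with
    | zero => rw [coeff_derivation_zero hC hX, coeff_zero]
    | succ m => rw [coeff_derivation_succ hC hX, h, coeff_zero]

theorem exists_derivation_eq_iff (hC : ∀ a, D (C a) = C (σ a) * X) (hX : D X = 0) (f : A[X]) :
    (∃ g, D g = f) ↔ f.coeff 0 = 0 ∧ ∀ m, ∃ a, σ a = f.coeff m := by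
  constructor
  · rintro ⟨g, rfl⟩
    refine ⟨coeff_derivation_zero hC hX g, fun m => ?_⟩
    cases m with
    | zero => exact ⟨0, by rw [map_zero, coeff_derivation_zero hC hX]⟩
    | succ m => exact ⟨g.coeff m, (coeff_derivation_succ hC hX g m).symm⟩
  · rintro ⟨h0, hσ⟩
    obtain ⟨g, hg⟩ := exists_forall_map_coeff_eq (map_zero σ) f.divX
      fun m => by simpa only [coeff_divX] using hσ (m + 1)
    refine ⟨g, ext fun m => ?_⟩
    cases m with
    | zero => rw [coeff_derivation_zero hC hX, h0]
    | succ m => rw [coeff_derivation_succ hC hX, hg, coeff_divX]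

end Polynomial

theorem derivation_C_eq_C_mul_X {n : ℕ} {σ : Derivation F₂ (R n) (R n)}
    (hσx : ∀ i, σ (x n i) = e n i) (hσe : ∀ i, σ (e n i) = 0)
    {D : Derivation F₂ (Polynomial (R n)) (Polynomial (R n))}
    (hDx : ∀ i, D (Polynomial.C (x n i)) = Polynomial.C (e n i) * Polynomial.X)
    (hDe : ∀ i, D (Polynomial.C (e n i)) = 0) (r : R n) :
    D (Polynomial.C r) = Polynomial.C (σ r) * Polynomial.X := by
  have h : D.compAlgebraMap (R n) = (Polynomial.monomial 1).compDer σ := by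
    refine Derivation.ext_of_adjoin_eq_top _
      (adjoin_range_comp_X_eq_top (Ideal.Quotient.mkₐ_surjective F₂ (Isq n))) ?_
    rintro _ ⟨i | i, rfl⟩
    · change D (Polynomial.C (x n i)) = Polynomial.monomial 1 (σ (x n i))
      rw [hDx, hσx, Polynomial.C_mul_X_eq_monomial]
    · change D (Polynomial.C (e n i)) = Polynomial.monomial 1 (σ (e n i))
      rw [hDe, hσe, map_zero]
  simpa [← Polynomial.C_mul_X_eq_monomial] using congr($h r)

theorem d2_homology_homotopy_fixed_points_general (n : ℕ)
    (σ : Derivation F₂ (R n) (R n))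
    (hσx : ∀ i, σ (x n i) = e n i) (hσe : ∀ i, σ (e n i) = 0)
    (D : Derivation F₂ (Polynomial (R n)) (Polynomial (R n)))
    (hDx : ∀ i, D (Polynomial.C (x n i)) = Polynomial.C (e n i) * Polynomial.X)
    (hDe : ∀ i, D (Polynomial.C (e n i)) = 0)
    (hDt : D Polynomial.X = 0) :
    (∀ (f : Polynomial (R n)) (k : ℕ), (D f).coeff (k + 1) = σ (f.coeff k)) ∧
    (∀ f : Polynomial (R n), (D f).coeff 0 = 0) ∧
    (∀ f : Polynomial (R n), D f = 0 ↔ ∀ k : ℕ, σ (f.coeff k) = 0) ∧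
    (∀ f : Polynomial (R n),
      (∃ g : Polynomial (R n), D g = f) ↔
        f.coeff 0 = 0 ∧ ∀ k : ℕ, ∃ r : R n, σ r = f.coeff k) := by
  have hC := derivation_C_eq_C_mul_X hσx hσe hDx hDe
  exact ⟨Polynomial.coeff_derivation_succ hC hDt, Polynomial.coeff_derivation_zero hC hDt,
    Polynomial.derivation_eq_zero_iff hC hDt, Polynomial.exists_derivation_eq_iff hC hDt⟩

/-- Proposition 5.2 (algebraic part): the `d²`-homology of the homological homotopy fixed
point spectral sequence, i.e. kernel and image of `D : f ↦ ∑ σ(f_k) t^(k+1)` on `(R n)[t]`. -/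
theorem d2_homology_homotopy_fixed_points (n : ℕ) (hn : 1 ≤ n)
    (σ : Derivation F₂ (R n) (R n))
    (hσx : ∀ i, σ (x n i) = e n i) (hσe : ∀ i, σ (e n i) = 0)
    (D : Derivation F₂ (Polynomial (R n)) (Polynomial (R n)))
    (hDx : ∀ i, D (Polynomial.C (x n i)) = Polynomial.C (e n i) * Polynomial.X)
    (hDe : ∀ i, D (Polynomial.C (e n i)) = 0)
    (hDt : D Polynomial.X = 0) :
    (∀ (f : Polynomial (R n)) (k : ℕ), (D f).coeff (k + 1) = σ (f.coeff k)) ∧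
    (∀ f : Polynomial (R n), (D f).coeff 0 = 0) ∧
    (∀ f : Polynomial (R n), D f = 0 ↔ ∀ k : ℕ, σ (f.coeff k) = 0) ∧
    (∀ f : Polynomial (R n),
      (∃ g : Polynomial (R n), D g = f) ↔
        f.coeff 0 = 0 ∧ ∀ k : ℕ, ∃ r : R n, σ r = f.coeff k) :=
  d2_homology_homotopy_fixed_points_general n σ hσx hσe D hDx hDe hDt
end
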